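/- Let X ⊆ ℝⁿ and Y ⊆ ℝᵐ be nonempty convex compact sets, κ_X = max_{x∈X} ‖x‖₂ > 0, κ_Y = max_{y∈Y} ‖y‖₂ > 0, κ = max{κ_X, κ_Y}, C_X = cone({κ_X} × X) ⊆ ℝ^{1+n}, C_Y = cone({κ_Y} × Y) ⊆ ℝ^{1+m}. Let F : ℝⁿ × ℝᵐ → ℝ be continuous on X × Y, convex in x on X for each y ∈ Y and concave in y on Y for each x ∈ X. Suppose the two players generate (x_t) ⊆ X and (y_t) ⊆ Y as follows: for each t there exist f_t ∈ ℝⁿ and g_t ∈ ℝᵐ with ‖f_t‖₂ ≤ L, ‖g_t‖₂ ≤ L, F(x, y_t) ≥ F(x_t, y_t) + ⟨f_t, x − x_t⟩ for all x ∈ X and F(x_t, y) ≤ F(x_t, y_t) + ⟨g_t, y − y_t⟩ for all y ∈ Y; the x-player runs CBA⁺ with uniform weights on the losses f_t over the cone C_X (payoffs v_t = (⟨f_t, x_t⟩/κ_X, −f_t), u_1 = π_{C_X}(v_1), x_{t+1} = (κ_X/ũ_t)·û_t if u_t ≠ 0 and x_{t+1} ∈ X arbitrary if u_t = 0, u_{t+1}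 = π_{C_X}((t·u_t + v_{t+1})/(t+1))), and the y-player runs the same CBA⁺ recursion on the losses −g_t over the cone C_Y. Let x̄_T = (2/(T(T+1))) Σ_{t=1}^T t·x_t and ȳ_T = (2/(T(T+1))) Σ_{t=1}^T t·y_t. Then sup_{y∈Y} F(x̄_T, y) − inf_{x∈X} F(x, ȳ_T) ≤ 8κL/√T. -/

import Mathlib

/-!
Rescaling the uniform-weight CBA⁺ iterates to `W t = (t + 1) • u t` gives the recursion
`W (t + 1) = π_C (W t + v (t + 1))`. The decision rule makes `v (t + 1)` orthogonal to `W t`, and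
projecting onto a cone does not increase the norm, so `‖W t‖² ≤ 2 L² (t + 1)`. For a comparator
`θ = (κ, z') ∈ C`, the projection gives `⟪v (t + 1), θ⟫ ≤ ⟪W (t + 1), θ⟫ - ⟪W t, θ⟫`. Since
`⟪W t, θ⟫ ≥ 0`, Abel summation bounds the linearly weighted regret
`∑ (t + 1) ⟪ℓ t, z t - z'⟫ = ∑ (t + 1) ⟪v t, θ⟫` by `T ⟪W (T - 1), θ⟫ ≤ 2 κ L T √T`. Convexity and
concavity of `F`, together with the subgradient inequalities, bound the duality gap of the averages
by the sum of the two normalized regrets.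
-/

open scoped RealInnerProductSpace
open Finset

noncomputable section

/-- `ℝ^{1+d}`, with its first coordinate a scalar block, as a Euclidean (L2) space. -/
abbrev Rone (d : ℕ) := WithLp 2 (ℝ × EuclideanSpace ℝ (Fin d))

/-- The conic hull `cone({κ} × Z) = {α • (κ, z) : α ≥ 0, z ∈ Z} ⊆ ℝ^{1+d}`. -/
def coneOf (d : ℕ) (κ : ℝ) (Z : Set (EuclideanSpace ℝ (Fin d))) : Set (Rone d) :=
  {w | ∃ a : ℝ, 0 ≤ a ∧ ∃ z ∈ Z, w = a • (WithLp.toLp 2 (κ, z) : Rone d)}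

/-- `p` is a nearest point to `u` in `C` (the metric projection of `u` onto `C`). -/
def IsProjOn {H : Type*} [NormedAddCommGroup H] (C : Set H) (u p : H) : Prop :=
  p ∈ C ∧ ∀ w ∈ C, ‖u - p‖ ≤ ‖u - w‖

theorem sum_range_succ_mul_le_of_le_sub {a b : ℕ → ℝ} {k : ℕ} (h0 : b 0 ≤ a 0)
    (hstep : ∀ t < k, b (t + 1) ≤ a (t + 1) - a t) (ha : ∀ t < k, 0 ≤ a t) :
    ∑ t ∈ range (k + 1), ((t : ℝ) + 1) * b t ≤ (k + 1) * a k := by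
  induction k with
  | zero => simpa using h0
  | succ k ih =>
    have hk := ih (fun t ht => hstep t (by omega)) (fun t ht => ha t (by omega))
    have hb := mul_le_mul_of_nonneg_left (hstep k k.lt_succ_self) (by positivity : (0 : ℝ) ≤ k + 2)
    rw [sum_range_succ]
    push_cast
    nlinarith [ha k k.lt_succ_self]

section Projection

variable {H : Type*} [NormedAddCommGroup H] [InnerProductSpace ℝ H] {u p : H}

theorem IsProjOn.inner_sub_le_zero {C : Set H} (hC : Convex ℝ C) (h : IsProjOn C u p) :
    ∀ w ∈ C, ⟪u - p, w - p⟫ ≤ 0 := by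
  have : Nonempty C := ⟨⟨p, h.1⟩⟩
  refine (norm_eq_iInf_iff_real_inner_le_zero hC h.1).1
    (le_antisymm (le_ciInf fun w => h.2 w w.2) ?_)
  exact ciInf_le ⟨0, Set.forall_mem_range.2 fun _ => norm_nonneg _⟩ (⟨p, h.1⟩ : C)

variable {K : ConvexCone ℝ H}

theorem IsProjOn.inner_sub_nonpos (h : IsProjOn K u p) {w : H} (hw : w ∈ K) :
    ⟪u - p, w⟫ ≤ 0 := by
  simpa using h.inner_sub_le_zero K.convex (p + w) (add_mem h.1 hw)

theorem IsProjOn.inner_le_inner (h : IsProjOn K u p) {w : H} (hw : w ∈ K) :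
    ⟪u, w⟫ ≤ ⟪p, w⟫ := by
  simpa [inner_sub_left] using h.inner_sub_nonpos hw

theorem IsProjOn.inner_sub_self_eq_zero (h : IsProjOn K u p) : ⟪u - p, p⟫ = 0 := by
  have hhalf := h.inner_sub_le_zero K.convex ((1 / 2 : ℝ) • p) (K.smul_mem (by norm_num) h.1)
  rw [show (1 / 2 : ℝ) • p - p = (-1 / 2 : ℝ) • p by module, real_inner_smul_right] at hhalf
  linarith [h.inner_sub_nonpos h.1]

theorem IsProjOn.norm_le (h : IsProjOn K u p) : ‖p‖ ≤ ‖u‖ := by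
  have hpyth := norm_add_sq_eq_norm_sq_add_norm_sq_real
    (real_inner_comm p (u - p) ▸ h.inner_sub_self_eq_zero)
  rw [add_sub_cancel] at hpyth
  nlinarith [norm_nonneg p, norm_nonneg u, mul_self_nonneg ‖u - p‖]

theorem IsProjOn.smul {c : ℝ} (hc : 0 < c) (h : IsProjOn K u p) : IsProjOn K (c • u) (c • p) := by
  refine ⟨K.smul_mem hc h.1, fun w hw => ?_⟩
  have hw' := h.2 (c⁻¹ • w) (K.smul_mem (inv_pos.2 hc) hw)
  rw [← smul_sub, show c • u - w = c • (u - c⁻¹ • w) by rw [smul_sub, smul_inv_smul₀ hc.ne'],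
    norm_smul, norm_smul]
  gcongr

theorem IsProjOn.of_inv_smul {c : ℝ} (hc : 0 < c) (h : IsProjOn K (c⁻¹ • u) p) :
    IsProjOn K u (c • p) := by
  simpa [smul_inv_smul₀ hc.ne'] using h.smul hc

variable {v W : ℕ → H} {k : ℕ}

theorem norm_sq_le_of_isProjOn_add {M : ℝ} (h0 : IsProjOn K (v 0) (W 0))
    (hstep : ∀ t < k, IsProjOn K (W t + v (t + 1)) (W (t + 1)))
    (horth : ∀ t < k, ⟪W t, v (t + 1)⟫ = 0) (hv : ∀ t ≤ k, ‖v t‖ ^ 2 ≤ M) :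
    ‖W k‖ ^ 2 ≤ (k + 1) * M := by
  induction k with
  | zero => simpa using (pow_le_pow_left₀ (norm_nonneg _) h0.norm_le 2).trans (hv 0 le_rfl)
  | succ k ih =>
    have hk := ih (fun t ht => hstep t (by omega)) (fun t ht => horth t (by omega))
      (fun t ht => hv t (by omega))
    have hpyth := norm_add_sq_eq_norm_sq_add_norm_sq_real (horth k k.lt_succ_self)
    have hproj := pow_le_pow_left₀ (norm_nonneg _) (hstep k k.lt_succ_self).norm_le 2
    push_cast
    nlinarith [hv (k + 1) le_rfl]

theorem sum_mul_inner_le_of_isProjOn_add {θ : H} (hθ : θ ∈ K) (h0 : IsProjOn K (v 0) (W 0))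
    (hstep : ∀ t < k, IsProjOn K (W t + v (t + 1)) (W (t + 1))) (hW : ∀ t < k, 0 ≤ ⟪W t, θ⟫) :
    ∑ t ∈ range (k + 1), ((t : ℝ) + 1) * ⟪v t, θ⟫ ≤ (k + 1) * ⟪W k, θ⟫ := by
  refine sum_range_succ_mul_le_of_le_sub (a := fun t => ⟪W t, θ⟫) (b := fun t => ⟪v t, θ⟫)
    (h0.inner_le_inner hθ) (fun t ht => ?_) hW
  have := (hstep t ht).inner_le_inner hθ
  rw [inner_add_left] at this
  linarith

end Projection

section ConicBlackwell

variable {d : ℕ} {κ : ℝ} {Z : Set (EuclideanSpace ℝ (Fin d))}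

theorem Rone.inner_def (w w' : Rone d) :
    ⟪w, w'⟫ = w.ofLp.1 * w'.ofLp.1 + ⟪w.ofLp.2, w'.ofLp.2⟫ := by
  simp [WithLp.prod_inner_apply, mul_comm]

def coneOf.convexCone (κ : ℝ) (hZ : Convex ℝ Z) : ConvexCone ℝ (Rone d) where
  carrier := coneOf d κ Z
  smul_mem' := by
    rintro c hc _ ⟨a, ha, z, hz, rfl⟩
    exact ⟨c * a, by positivity, z, hz, by rw [smul_smul]⟩
  add_mem' := by
    rintro _ ⟨a, ha, z, hz, rfl⟩ _ ⟨b, hb, z', hz', rfl⟩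
    rcases (add_nonneg ha hb).eq_or_lt with hab | hab
    · obtain ⟨rfl, rfl⟩ : a = 0 ∧ b = 0 := ⟨by linarith, by linarith⟩
      exact ⟨0, le_rfl, z, hz, by simp⟩
    refine ⟨a + b, hab.le, _, convex_iff_div.1 hZ hz hz' ha hb hab, ?_⟩
    apply WithLp.ofLp_injective 2
    ext
    · simp [add_mul]
    · simp [smul_smul, mul_div_cancel₀ _ hab.ne']

theorem coneOf.inner_nonneg (hZκ : ∀ z ∈ Z, ‖z‖ ≤ κ) {w w' : Rone d}
    (hw : w ∈ coneOf d κ Z) (hw' : w' ∈ coneOf d κ Z) : 0 ≤ ⟪w, w'⟫ := by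
  obtain ⟨a, ha, z, hz, rfl⟩ := hw
  obtain ⟨b, hb, z', hz', rfl⟩ := hw'
  have hzz' : ‖z‖ * ‖z'‖ ≤ κ * κ := mul_le_mul (hZκ z hz) (hZκ z' hz') (norm_nonneg _)
    ((norm_nonneg _).trans (hZκ z hz))
  have : 0 ≤ κ * κ + ⟪z, z'⟫ := by linarith [neg_le_of_abs_le (abs_real_inner_le_norm z z')]
  rw [real_inner_smul_left, real_inner_smul_right, Rone.inner_def]
  exact mul_nonneg ha (mul_nonneg hb this)

theorem coneOf.fst_ne_zero (hκ : κ ≠ 0) {w : Rone d} (hw : w ∈ coneOf d κ Z) (h0 : w ≠ 0) :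
    w.ofLp.1 ≠ 0 := by
  obtain ⟨a, -, z, -, rfl⟩ := hw
  have ha : a ≠ 0 := by rintro rfl; simp at h0
  exact mul_ne_zero ha hκ

theorem coneOf.toLp_mem {z : EuclideanSpace ℝ (Fin d)} (hz : z ∈ Z) :
    (WithLp.toLp 2 (κ, z) : Rone d) ∈ coneOf d κ Z :=
  ⟨1, zero_le_one, z, hz, (one_smul ℝ _).symm⟩

theorem norm_toLp_sq_le (hκ : 0 < κ) {z : EuclideanSpace ℝ (Fin d)} (hz : ‖z‖ ≤ κ) :
    ‖(WithLp.toLp 2 (κ, z) : Rone d)‖ ^ 2 ≤ 2 * κ ^ 2 := by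
  rw [WithLp.prod_norm_sq_eq_of_L2, two_mul]
  simpa [abs_of_pos hκ] using pow_le_pow_left₀ (norm_nonneg _) hz 2

/-- The payoff vector `v_t` of CBA⁺ for the loss `ℓ` at the decision `z`. -/
def cbaPayoff (κ : ℝ) (ℓ z : EuclideanSpace ℝ (Fin d)) : Rone d :=
  WithLp.toLp 2 (⟪ℓ, z⟫ / κ, -ℓ)

theorem inner_cbaPayoff_toLp (hκ : κ ≠ 0) (ℓ z z' : EuclideanSpace ℝ (Fin d)) :
    ⟪cbaPayoff κ ℓ z, WithLp.toLp 2 (κ, z')⟫ = ⟪ℓ, z - z'⟫ := by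
  rw [Rone.inner_def, inner_sub_right]
  simp [cbaPayoff, div_mul_cancel₀ _ hκ, sub_eq_add_neg]

theorem norm_cbaPayoff_sq_le (hκ : 0 < κ) {L : ℝ} {ℓ z : EuclideanSpace ℝ (Fin d)}
    (hℓ : ‖ℓ‖ ≤ L) (hz : ‖z‖ ≤ κ) : ‖cbaPayoff κ ℓ z‖ ^ 2 ≤ 2 * L ^ 2 := by
  have hfst : |⟪ℓ, z⟫ / κ| ≤ L := by
    rw [abs_div, abs_of_pos hκ, div_le_iff₀ hκ]
    calc |⟪ℓ, z⟫| ≤ ‖ℓ‖ * ‖z‖ := abs_real_inner_le_norm ℓ z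
      _ ≤ L * κ := mul_le_mul hℓ hz (norm_nonneg _) ((norm_nonneg _).trans hℓ)
  rw [WithLp.prod_norm_sq_eq_of_L2, cbaPayoff, WithLp.toLp_fst, WithLp.toLp_snd, norm_neg,
    Real.norm_eq_abs, sq_abs, two_mul]
  exact add_le_add (sq_le_sq' (neg_le_of_abs_le hfst) (le_of_abs_le hfst))
    (pow_le_pow_left₀ (norm_nonneg ℓ) hℓ 2)

theorem inner_cbaPayoff_eq_zero_of_play (hκ : κ ≠ 0) {u : Rone d} (hu : u ∈ coneOf d κ Z)
    {ℓ z : EuclideanSpace ℝ (Fin d)} (hz : u ≠ 0 → z = (κ / u.ofLp.1) • u.ofLp.2) :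
    ⟪u, cbaPayoff κ ℓ z⟫ = 0 := by
  by_cases h0 : u = 0
  · simp [h0]
  have hu1 := coneOf.fst_ne_zero hκ hu h0
  rw [hz h0, Rone.inner_def]
  simp only [cbaPayoff, real_inner_smul_right, inner_neg_right, real_inner_comm ℓ]
  field_simp
  ring

theorem cbaPlus_weighted_regret_le {L : ℝ} (hZ : Convex ℝ Z) (hκ : 0 < κ)
    (hZκ : ∀ z ∈ Z, ‖z‖ ≤ κ) {T : ℕ} {z ℓ : ℕ → EuclideanSpace ℝ (Fin d)} {v u : ℕ → Rone d}
    (hz : ∀ t < T, z t ∈ Z) (hℓ : ∀ t < T, ‖ℓ t‖ ≤ L)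
    (hv : ∀ t < T, v t = cbaPayoff κ (ℓ t) (z t))
    (hu0 : IsProjOn (coneOf d κ Z) (v 0) (u 0))
    (hu : ∀ t : ℕ, t + 1 < T →
      IsProjOn (coneOf d κ Z) ((((t : ℝ) + 2)⁻¹) • (((t : ℝ) + 1) • u t + v (t + 1))) (u (t + 1)))
    (hplay : ∀ t : ℕ, t + 1 < T → u t ≠ 0 → z (t + 1) = (κ / (u t).ofLp.1) • (u t).ofLp.2)
    {z' : EuclideanSpace ℝ (Fin d)} (hz' : z' ∈ Z) :
    ∑ t ∈ range T, ((t : ℝ) + 1) * ⟪ℓ t, z t - z'⟫ ≤ 2 * κ * L * T * √T := by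
  rcases T with _ | k
  · simp
  let K := coneOf.convexCone κ hZ
  have huK : ∀ t < k + 1, u t ∈ K := by
    rintro (_ | t) ht
    exacts [hu0.1, (hu t ht).1]
  -- by positive homogeneity of the projection, `W (t + 1) = π_K (W t + v (t + 1))`
  let W : ℕ → Rone d := fun t => ((t : ℝ) + 1) • u t
  have hW0 : IsProjOn K (v 0) (W 0) := by
    simp only [W, Nat.cast_zero, zero_add, one_smul]
    exact hu0
  have hW : ∀ t < k, IsProjOn K (W t + v (t + 1)) (W (t + 1)) := by
    intro t ht
    have hut := hu t (by omega)
    change IsProjOn (K : Set (Rone d)) _ _ at hut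
    convert hut.of_inv_smul (by positivity : (0 : ℝ) < t + 2) using 2
    simp only [Nat.cast_succ]
    ring_nf
  have horth : ∀ t < k, ⟪W t, v (t + 1)⟫ = 0 := fun t ht => by
    rw [real_inner_smul_left, hv (t + 1) (by omega),
      inner_cbaPayoff_eq_zero_of_play hκ.ne' (huK t (by omega)) (hplay t (by omega)), mul_zero]
  let θ : Rone d := WithLp.toLp 2 (κ, z')
  have hWθ : ‖W k‖ * ‖θ‖ ≤ 2 * κ * L * √(k + 1) := by
    have hL : 0 ≤ L := (norm_nonneg _).trans (hℓ 0 k.succ_pos)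
    have hWk : ‖W k‖ ^ 2 ≤ (k + 1) * (2 * L ^ 2) :=
      norm_sq_le_of_isProjOn_add hW0 hW horth fun t ht => by
        rw [hv t (by omega)]
        exact norm_cbaPayoff_sq_le hκ (hℓ t (by omega)) (hZκ _ (hz t (by omega)))
    refine (pow_le_pow_iff_left₀ (by positivity) (by positivity) two_ne_zero).1 ?_
    rw [mul_pow, mul_pow, Real.sq_sqrt (by positivity)]
    nlinarith [mul_le_mul hWk (norm_toLp_sq_le hκ (hZκ z' hz')) (sq_nonneg _) (by positivity)]
  push_cast
  calc ∑ t ∈ range (k + 1), ((t : ℝ) + 1) * ⟪ℓ t, z t - z'⟫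
      = ∑ t ∈ range (k + 1), ((t : ℝ) + 1) * ⟪v t, θ⟫ := by
        refine sum_congr rfl fun t ht => ?_
        rw [hv t (mem_range.1 ht), inner_cbaPayoff_toLp hκ.ne']
    _ ≤ (k + 1) * ⟪W k, θ⟫ :=
        sum_mul_inner_le_of_isProjOn_add (coneOf.toLp_mem hz') hW0 hW fun t ht =>
          coneOf.inner_nonneg hZκ (K.smul_mem (by positivity) (huK t (by omega)))
            (coneOf.toLp_mem hz')
    _ ≤ (k + 1) * (2 * κ * L * √(k + 1)) := by
        gcongr
        exact (real_inner_le_norm _ _).trans hWθ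
    _ = 2 * κ * L * (k + 1) * √(k + 1) := by ring

end ConicBlackwell

section Game

variable {ι E E' : Type*} [NormedAddCommGroup E] [InnerProductSpace ℝ E]
  [NormedAddCommGroup E'] [InnerProductSpace ℝ E']
  {X : Set E} {Y : Set E'} {F : E → E' → ℝ} {s : Finset ι} {x : ι → E} {y : ι → E'}
  {w : ι → ℝ}

theorem map_sum_smul_le_add_sum_inner (hFconv : ∀ y' ∈ Y, ConvexOn ℝ X (fun x' => F x' y'))
    (hx : ∀ t ∈ s, x t ∈ X) {g : ι → E'}
    (hg : ∀ t ∈ s, ∀ y' ∈ Y, F (x t) y' ≤ F (x t) (y t) + ⟪g t, y' - y t⟫)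
    (hw0 : ∀ t ∈ s, 0 ≤ w t) (hw1 : ∑ t ∈ s, w t = 1) {y' : E'} (hy' : y' ∈ Y) :
    F (∑ t ∈ s, w t • x t) y' ≤
      ∑ t ∈ s, w t * F (x t) (y t) + ∑ t ∈ s, w t * ⟪-g t, y t - y'⟫ := by
  calc F (∑ t ∈ s, w t • x t) y' ≤ ∑ t ∈ s, w t * F (x t) y' := by
        simpa using (hFconv y' hy').map_sum_le hw0 hw1 hx
    _ ≤ ∑ t ∈ s, w t * (F (x t) (y t) + ⟪g t, y' - y t⟫) :=
        sum_le_sum fun t ht => mul_le_mul_of_nonneg_left (hg t ht y' hy') (hw0 t ht)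
    _ = _ := by
        rw [← sum_add_distrib]
        refine sum_congr rfl fun t _ => ?_
        rw [inner_neg_left, ← inner_neg_right, neg_sub, mul_add]

theorem sum_inner_add_sum_le_map_sum_smul (hFconc : ∀ x' ∈ X, ConcaveOn ℝ Y (fun y' => F x' y'))
    (hy : ∀ t ∈ s, y t ∈ Y) {f : ι → E}
    (hf : ∀ t ∈ s, ∀ x' ∈ X, F (x t) (y t) + ⟪f t, x' - x t⟫ ≤ F x' (y t))
    (hw0 : ∀ t ∈ s, 0 ≤ w t) (hw1 : ∑ t ∈ s, w t = 1) {x' : E} (hx' : x' ∈ X) :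
    ∑ t ∈ s, w t * F (x t) (y t) - ∑ t ∈ s, w t * ⟪f t, x t - x'⟫ ≤
      F x' (∑ t ∈ s, w t • y t) := by
  calc ∑ t ∈ s, w t * F (x t) (y t) - ∑ t ∈ s, w t * ⟪f t, x t - x'⟫
      = ∑ t ∈ s, w t * (F (x t) (y t) + ⟪f t, x' - x t⟫) := by
        rw [← sum_sub_distrib]
        refine sum_congr rfl fun t _ => ?_
        rw [← neg_sub x' (x t), inner_neg_right]
        ring
    _ ≤ ∑ t ∈ s, w t * F x' (y t) :=
        sum_le_sum fun t ht => mul_le_mul_of_nonneg_left (hf t ht x' hx') (hw0 t ht)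
    _ ≤ F x' (∑ t ∈ s, w t • y t) := by
        simpa using (hFconc x' hx').le_map_sum hw0 hw1 hy

theorem sSup_sub_sInf_le_of_regret (hX : X.Nonempty) (hY : Y.Nonempty)
    (hFconv : ∀ y' ∈ Y, ConvexOn ℝ X (fun x' => F x' y'))
    (hFconc : ∀ x' ∈ X, ConcaveOn ℝ Y (fun y' => F x' y'))
    (hx : ∀ t ∈ s, x t ∈ X) (hy : ∀ t ∈ s, y t ∈ Y) {f : ι → E} {g : ι → E'}
    (hf : ∀ t ∈ s, ∀ x' ∈ X, F (x t) (y t) + ⟪f t, x' - x t⟫ ≤ F x' (y t))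
    (hg : ∀ t ∈ s, ∀ y' ∈ Y, F (x t) y' ≤ F (x t) (y t) + ⟪g t, y' - y t⟫)
    {a : ι → ℝ} {c Rx Ry : ℝ} (ha : ∀ t ∈ s, 0 ≤ a t) (hca : c * ∑ t ∈ s, a t = 1)
    (hRx : ∀ x' ∈ X, ∑ t ∈ s, a t * ⟪f t, x t - x'⟫ ≤ Rx)
    (hRy : ∀ y' ∈ Y, ∑ t ∈ s, a t * ⟪-g t, y t - y'⟫ ≤ Ry) :
    sSup ((fun y' => F (c • ∑ t ∈ s, a t • x t) y') '' Y) -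
        sInf ((fun x' => F x' (c • ∑ t ∈ s, a t • y t)) '' X) ≤ c * (Rx + Ry) := by
  have hc : 0 ≤ c := by
    by_contra! hc
    nlinarith [sum_nonneg ha]
  have hw0 : ∀ t ∈ s, 0 ≤ c * a t := fun t ht => mul_nonneg hc (ha t ht)
  have hw1 : ∑ t ∈ s, c * a t = 1 := by rw [← mul_sum, hca]
  have hscale {b : ι → ℝ} {R : ℝ} (hb : ∑ t ∈ s, a t * b t ≤ R) :
      ∑ t ∈ s, c * a t * b t ≤ c * R := by
    simpa only [mul_sum, mul_assoc] using mul_le_mul_of_nonneg_left hb hc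
  simp only [smul_sum, smul_smul]
  have hSup : sSup ((fun y' => F (∑ t ∈ s, (c * a t) • x t) y') '' Y) ≤
      ∑ t ∈ s, c * a t * F (x t) (y t) + c * Ry := by
    refine csSup_le (hY.image _) ?_
    rintro _ ⟨y', hy', rfl⟩
    linarith [map_sum_smul_le_add_sum_inner hFconv hx hg hw0 hw1 hy', hscale (hRy y' hy')]
  have hInf : ∑ t ∈ s, c * a t * F (x t) (y t) - c * Rx ≤
      sInf ((fun x' => F x' (∑ t ∈ s, (c * a t) • y t)) '' X) := by
    refine le_csInf (hX.image _) ?_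
    rintro _ ⟨x', hx', rfl⟩
    linarith [sum_inner_add_sum_le_map_sum_smul hFconc hy hf hw0 hw1 hx', hscale (hRx x' hx')]
  linarith

end Game

theorem two_div_mul_sum_range_add_one {T : ℕ} (hT : 1 ≤ T) :
    2 / ((T : ℝ) * ((T : ℝ) + 1)) * ∑ t ∈ range T, ((t : ℝ) + 1) = 1 := by
  have hsum (N : ℕ) : ∑ t ∈ range N, ((t : ℝ) + 1) = (N : ℝ) * ((N : ℝ) + 1) / 2 := by
    induction N with
    | zero => simp
    | succ k ih => rw [sum_range_succ, ih]; push_cast; ring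
  have : (0 : ℝ) < T := by exact_mod_cast hT
  rw [hsum]
  field_simp

/-- Sequences are indexed from `0`: index `t` is round `t + 1`. -/
theorem cbaPlus_repeated_game_duality_gap_general (n m T : ℕ) (hT : 1 ≤ T)
    (X : Set (EuclideanSpace ℝ (Fin n))) (Y : Set (EuclideanSpace ℝ (Fin m)))
    (hXne : X.Nonempty) (hXconv : Convex ℝ X)
    (hYne : Y.Nonempty) (hYconv : Convex ℝ Y)
    (κX κY κ L : ℝ)
    (hκX : IsGreatest ((fun z => ‖z‖) '' X) κX) (hκXpos : 0 < κX)
    (hκY : IsGreatest ((fun z => ‖z‖) '' Y) κY) (hκYpos : 0 < κY)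
    (hκ : κ = max κX κY)
    (F : EuclideanSpace ℝ (Fin n) → EuclideanSpace ℝ (Fin m) → ℝ)
    (hFconv : ∀ y' ∈ Y, ConvexOn ℝ X (fun x' => F x' y'))
    (hFconc : ∀ x' ∈ X, ConcaveOn ℝ Y (fun y' => F x' y'))
    (x : ℕ → EuclideanSpace ℝ (Fin n)) (y : ℕ → EuclideanSpace ℝ (Fin m))
    (hxmem : ∀ t < T, x t ∈ X) (hymem : ∀ t < T, y t ∈ Y)
    (f : ℕ → EuclideanSpace ℝ (Fin n)) (g : ℕ → EuclideanSpace ℝ (Fin m))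
    (hfL : ∀ t < T, ‖f t‖ ≤ L) (hgL : ∀ t < T, ‖g t‖ ≤ L)
    -- `f t` is a subgradient of `F (·, y t)` at `x t`
    (hf : ∀ t < T, ∀ x' ∈ X, F (x t) (y t) + ⟪f t, x' - x t⟫ ≤ F x' (y t))
    -- `g t` is a supergradient of `F (x t, ·)` at `y t`
    (hg : ∀ t < T, ∀ y' ∈ Y, F (x t) y' ≤ F (x t) (y t) + ⟪g t, y' - y t⟫)
    -- the x-player runs CBA⁺ with uniform weights on the losses `f t` over `cone({κX} × X)`
    (vx : ℕ → Rone n) (ux : ℕ → Rone n)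
    (hvx : ∀ t < T, vx t = (WithLp.toLp 2 (⟪f t, x t⟫ / κX, -f t) : Rone n))
    (hux0 : IsProjOn (coneOf n κX X) (vx 0) (ux 0))
    (huxrec : ∀ t : ℕ, t + 1 < T →
      IsProjOn (coneOf n κX X)
        ((((t : ℝ) + 2)⁻¹) • (((t : ℝ) + 1) • ux t + vx (t + 1))) (ux (t + 1)))
    (hxplay : ∀ t : ℕ, t + 1 < T → ux t ≠ 0 →
      x (t + 1) = (κX / (ux t).ofLp.1) • (ux t).ofLp.2)
    -- the y-player runs the same CBA⁺ recursion on the losses `−g t` over `cone({κY} × Y)`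
    (vy : ℕ → Rone m) (uy : ℕ → Rone m)
    (hvy : ∀ t < T, vy t = (WithLp.toLp 2 (⟪-g t, y t⟫ / κY, g t) : Rone m))
    (huy0 : IsProjOn (coneOf m κY Y) (vy 0) (uy 0))
    (huyrec : ∀ t : ℕ, t + 1 < T →
      IsProjOn (coneOf m κY Y)
        ((((t : ℝ) + 2)⁻¹) • (((t : ℝ) + 1) • uy t + vy (t + 1))) (uy (t + 1)))
    (hyplay : ∀ t : ℕ, t + 1 < T → uy t ≠ 0 →
      y (t + 1) = (κY / (uy t).ofLp.1) • (uy t).ofLp.2)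
    -- linearly averaged iterates
    (xbar : EuclideanSpace ℝ (Fin n)) (ybar : EuclideanSpace ℝ (Fin m))
    (hxbar : xbar = (2 / ((T : ℝ) * ((T : ℝ) + 1))) •
      ∑ t ∈ Finset.range T, ((t : ℝ) + 1) • x t)
    (hybar : ybar = (2 / ((T : ℝ) * ((T : ℝ) + 1))) •
      ∑ t ∈ Finset.range T, ((t : ℝ) + 1) • y t) :
    sSup ((fun y' => F xbar y') '' Y) - sInf ((fun x' => F x' ybar) '' X)
      ≤ 8 * κ * L / Real.sqrt T := by
  have hL : 0 ≤ L := (norm_nonneg _).trans (hfL 0 hT)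
  have hTpos : (0 : ℝ) < T := by exact_mod_cast hT
  have hregX (x' : EuclideanSpace ℝ (Fin n)) (hx' : x' ∈ X) :=
    cbaPlus_weighted_regret_le hXconv hκXpos (fun z hz => hκX.2 ⟨z, hz, rfl⟩) hxmem hfL hvx hux0
      huxrec hxplay hx'
  have hregY (y' : EuclideanSpace ℝ (Fin m)) (hy' : y' ∈ Y) :=
    cbaPlus_weighted_regret_le hYconv hκYpos (fun z hz => hκY.2 ⟨z, hz, rfl⟩) hymem
      (fun t ht => (norm_neg (g t)).trans_le (hgL t ht))
      (fun t ht => by rw [hvy t ht, cbaPayoff, neg_neg]) huy0 huyrec hyplay hy'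
  rw [hxbar, hybar]
  refine (sSup_sub_sInf_le_of_regret hXne hYne hFconv hFconc (fun t ht => hxmem t (mem_range.1 ht))
    (fun t ht => hymem t (mem_range.1 ht)) (fun t ht => hf t (mem_range.1 ht))
    (fun t ht => hg t (mem_range.1 ht)) (fun t _ => by positivity)
    (two_div_mul_sum_range_add_one hT) hregX hregY).trans ?_
  have hκX' : κX ≤ κ := hκ ▸ le_max_left _ _
  have hκY' : κY ≤ κ := hκ ▸ le_max_right _ _
  rw [le_div_iff₀ (Real.sqrt_pos.2 hTpos)]
  field_simp
  rw [Real.sq_sqrt hTpos.le]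
  have hLT : 0 ≤ L * T := mul_nonneg hL hTpos.le
  nlinarith [mul_nonneg hLT (sub_nonneg.2 hκX'), mul_nonneg hLT (sub_nonneg.2 hκY'),
    mul_nonneg hL (hκXpos.trans_le hκX').le]

/-- Theorem 3 of the paper: when both players of the repeated game for the
saddle-point problem use CBA⁺ with uniform weights (the `x`-player on the losses `f_t`, the
`y`-player on the losses `−g_t`), the duality gap of the linearly averaged iterates is at
most `8κL/√T`.  Sequences are indexed from `0`, so index `t ∈ {0, …, T−1}` is round `t+1`. -/
theorem cbaPlus_repeated_game_duality_gap (n m T : ℕ) (hT : 1 ≤ T)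
    (X : Set (EuclideanSpace ℝ (Fin n))) (Y : Set (EuclideanSpace ℝ (Fin m)))
    (hXne : X.Nonempty) (hXconv : Convex ℝ X) (hXcomp : IsCompact X)
    (hYne : Y.Nonempty) (hYconv : Convex ℝ Y) (hYcomp : IsCompact Y)
    (κX κY κ L : ℝ)
    (hκX : IsGreatest ((fun z => ‖z‖) '' X) κX) (hκXpos : 0 < κX)
    (hκY : IsGreatest ((fun z => ‖z‖) '' Y) κY) (hκYpos : 0 < κY)
    (hκ : κ = max κX κY)
    (F : EuclideanSpace ℝ (Fin n) → EuclideanSpace ℝ (Fin m) → ℝ)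
    (hFcont : ContinuousOn (fun p => F p.1 p.2) (X ×ˢ Y))
    (hFconv : ∀ y' ∈ Y, ConvexOn ℝ X (fun x' => F x' y'))
    (hFconc : ∀ x' ∈ X, ConcaveOn ℝ Y (fun y' => F x' y'))
    (x : ℕ → EuclideanSpace ℝ (Fin n)) (y : ℕ → EuclideanSpace ℝ (Fin m))
    (hxmem : ∀ t < T, x t ∈ X) (hymem : ∀ t < T, y t ∈ Y)
    (f : ℕ → EuclideanSpace ℝ (Fin n)) (g : ℕ → EuclideanSpace ℝ (Fin m))
    (hfL : ∀ t < T, ‖f t‖ ≤ L) (hgL : ∀ t < T, ‖g t‖ ≤ L)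
    -- `f t` is a subgradient of `F (·, y t)` at `x t`
    (hf : ∀ t < T, ∀ x' ∈ X, F (x t) (y t) + ⟪f t, x' - x t⟫ ≤ F x' (y t))
    -- `g t` is a supergradient of `F (x t, ·)` at `y t`
    (hg : ∀ t < T, ∀ y' ∈ Y, F (x t) y' ≤ F (x t) (y t) + ⟪g t, y' - y t⟫)
    -- the x-player runs CBA⁺ with uniform weights on the losses `f t` over `cone({κX} × X)`
    (vx : ℕ → Rone n) (ux : ℕ → Rone n)
    (hvx : ∀ t < T, vx t = (WithLp.toLp 2 (⟪f t, x t⟫ / κX, -f t) : Rone n))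
    (hux0 : IsProjOn (coneOf n κX X) (vx 0) (ux 0))
    (huxrec : ∀ t : ℕ, t + 1 < T →
      IsProjOn (coneOf n κX X)
        ((((t : ℝ) + 2)⁻¹) • (((t : ℝ) + 1) • ux t + vx (t + 1))) (ux (t + 1)))
    (hxplay : ∀ t : ℕ, t + 1 < T → ux t ≠ 0 →
      x (t + 1) = (κX / (ux t).ofLp.1) • (ux t).ofLp.2)
    -- the y-player runs the same CBA⁺ recursion on the losses `−g t` over `cone({κY} × Y)`
    (vy : ℕ → Rone m) (uy : ℕ → Rone m)
    (hvy : ∀ t < T, vy t = (WithLp.toLp 2 (⟪-g t, y t⟫ / κY, g t) : Rone m))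
    (huy0 : IsProjOn (coneOf m κY Y) (vy 0) (uy 0))
    (huyrec : ∀ t : ℕ, t + 1 < T →
      IsProjOn (coneOf m κY Y)
        ((((t : ℝ) + 2)⁻¹) • (((t : ℝ) + 1) • uy t + vy (t + 1))) (uy (t + 1)))
    (hyplay : ∀ t : ℕ, t + 1 < T → uy t ≠ 0 →
      y (t + 1) = (κY / (uy t).ofLp.1) • (uy t).ofLp.2)
    -- linearly averaged iterates
    (xbar : EuclideanSpace ℝ (Fin n)) (ybar : EuclideanSpace ℝ (Fin m))
    (hxbar : xbar = (2 / ((T : ℝ) * ((T : ℝ) + 1))) •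
      ∑ t ∈ Finset.range T, ((t : ℝ) + 1) • x t)
    (hybar : ybar = (2 / ((T : ℝ) * ((T : ℝ) + 1))) •
      ∑ t ∈ Finset.range T, ((t : ℝ) + 1) • y t) :
    sSup ((fun y' => F xbar y') '' Y) - sInf ((fun x' => F x' ybar) '' X)
      ≤ 8 * κ * L / Real.sqrt T :=
  cbaPlus_repeated_game_duality_gap_general n m T hT X Y hXne hXconv hYne hYconv κX κY κ L hκX
    hκXpos hκY hκYpos hκ F hFconv hFconc x y hxmem hymem f g hfL hgL hf hg vx ux hvx hux0 huxrec
    hxplay vy uy hvy huy0 huyrec hyplay xbar ybar hxbar hybar
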